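/- For x ∈ (0, 1/2], the exponential integral satisfies the bound |−Ei(−x) − (−γ − log x)| ≤ x, where γ is the Euler–Mascheroni constant; equivalently −Ei(−x) = −γ − log x + O(x) as x → 0⁺. -/

import Mathlib

/-!
Integration by parts, on `(x, ∞)` with primitive `e^{-t} log t` and on `(0, x]`
with primitive `(1 - e^{-t}) log t`, gives
`-Ei(-x) = -log x + ∫_0^∞ e^{-t} log t dt + ∫_0^x (1 - e^{-t})/t dt`.
The middle integral is `Γ'(1) = -γ`, and `0 ≤ 1 - e^{-t} ≤ t` puts the last one in `[0, x]`.
-/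

open MeasureTheory Set

/-- The exponential integral `Ei y` for `y < 0`, defined by
`Ei(-x) = -∫_x^∞ e^{-t}/t dt` for `x > 0`. -/
noncomputable def Ei (y : ℝ) : ℝ := -∫ t in Ioi (-y), Real.exp (-t) / t

open Filter Real Topology

lemma one_sub_exp_neg_nonneg {t : ℝ} (ht : 0 ≤ t) : 0 ≤ 1 - exp (-t) := by
  simpa using exp_le_one_iff.mpr (neg_nonpos.mpr ht)

lemma one_sub_exp_neg_le (t : ℝ) : 1 - exp (-t) ≤ t := by
  linarith [add_one_le_exp (-t)]

lemma intervalIntegrable_exp_neg_mul_log (a b : ℝ) :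
    IntervalIntegrable (fun t => exp (-t) * log t) volume a b :=
  intervalIntegral.intervalIntegrable_log'.continuousOn_mul (by fun_prop)

lemma integrableOn_exp_neg_mul_log : IntegrableOn (fun t => exp (-t) * log t) (Ioi 0) := by
  rw [← Ioc_union_Ioi_eq_Ioi zero_le_one]
  refine ((intervalIntegrable_iff_integrableOn_Ioc_of_le zero_le_one).mp
    (intervalIntegrable_exp_neg_mul_log 0 1)).union ?_
  have hGamma : IntegrableOn (fun t => exp (-t) * t ^ ((2 : ℝ) - 1)) (Ioi 1) :=
    (GammaIntegral_convergent two_pos).mono_set (Ioi_subset_Ioi zero_le_one)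
  refine hGamma.mono' (by fun_prop) ?_
  filter_upwards [ae_restrict_mem measurableSet_Ioi] with t (ht : 1 < t)
  rw [norm_mul, norm_of_nonneg (exp_pos _).le, norm_of_nonneg (log_nonneg ht.le)]
  norm_num
  exact mul_le_mul_of_nonneg_left ((log_le_sub_one_of_pos (by linarith)).trans (by linarith))
    (exp_pos _).le

lemma integral_exp_neg_mul_log :
    ∫ t in Ioi 0, exp (-t) * log t = -eulerMascheroniConstant := by
  have hGammaIntegral := Complex.hasDerivAt_GammaIntegral (s := 1) (by norm_num)
  have hGamma : Complex.Gamma =ᶠ[𝓝 1] Complex.GammaIntegral := by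
    filter_upwards [(isOpen_lt continuous_const Complex.continuous_re).mem_nhds
      (show (0 : ℝ) < (1 : ℂ).re by norm_num)] with s hs
    exact Complex.Gamma_eq_integral hs
  have hderiv_eq := (hGammaIntegral.congr_of_eventuallyEq hGamma).unique
    Complex.hasDerivAt_Gamma_one
  rw [← Complex.ofReal_inj, ← integral_complex_ofReal, Complex.ofReal_neg, ← hderiv_eq]
  refine setIntegral_congr_fun measurableSet_Ioi fun t _ => ?_
  simp [mul_comm]

lemma integrableOn_exp_neg_div {x : ℝ} (hx : 0 < x) :
    IntegrableOn (fun t => exp (-t) / t) (Ioi x) := by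
  refine ((exp_neg_integrableOn_Ioi x one_pos).const_mul x⁻¹).mono'
    (by fun_prop : Measurable fun t => exp (-t) / t).aestronglyMeasurable ?_
  filter_upwards [ae_restrict_mem measurableSet_Ioi] with t (ht : x < t)
  rw [norm_of_nonneg (div_nonneg (exp_pos _).le (hx.trans ht).le), div_eq_inv_mul, neg_one_mul]
  exact mul_le_mul_of_nonneg_right (inv_anti₀ hx ht.le) (exp_pos _).le

lemma intervalIntegrable_one_sub_exp_neg_div {x : ℝ} (hx : 0 ≤ x) :
    IntervalIntegrable (fun t => (1 - exp (-t)) / t) volume 0 x := by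
  refine (intervalIntegrable_const (c := (1 : ℝ))).mono_fun'
    (by fun_prop : Measurable fun t => (1 - exp (-t)) / t).aestronglyMeasurable ?_
  rw [uIoc_of_le hx]
  filter_upwards [ae_restrict_mem measurableSet_Ioc] with t ht
  rw [norm_of_nonneg (div_nonneg (one_sub_exp_neg_nonneg ht.1.le) ht.1.le)]
  exact div_le_one_of_le₀ (one_sub_exp_neg_le t) ht.1.le

lemma integral_Ioi_exp_neg_div {x : ℝ} (hx : 0 < x) :
    ∫ t in Ioi x, exp (-t) / t = -(exp (-x) * log x) + ∫ t in Ioi x, exp (-t) * log t := by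
  have hderiv : ∀ t ∈ Ioi x, HasDerivAt (fun t => exp (-t) * log t)
      (exp (-t) / t - exp (-t) * log t) t := by
    intro t (ht : x < t)
    exact ((hasDerivAt_neg t).exp.mul (hasDerivAt_log (hx.trans ht).ne')).congr_deriv (by ring)
  have hlim : Tendsto (fun t => exp (-t) * log t) atTop (𝓝 0) := by
    refine squeeze_zero' ?_ ?_ (by simpa using tendsto_pow_mul_exp_neg_atTop_nhds_zero 1)
    · filter_upwards [eventually_ge_atTop 1] with t ht
      exact mul_nonneg (exp_pos _).le (log_nonneg ht)
    · filter_upwards [eventually_gt_atTop 0] with t ht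
      rw [mul_comm]
      exact mul_le_mul_of_nonneg_right ((log_le_sub_one_of_pos ht).trans (by linarith))
        (exp_pos _).le
  have hint := integrableOn_exp_neg_mul_log.mono_set (Ioi_subset_Ioi hx.le)
  have hftc := integral_Ioi_of_hasDerivAt_of_tendsto
    (ContinuousAt.continuousWithinAt (by fun_prop (disch := exact hx.ne'))) hderiv
    ((integrableOn_exp_neg_div hx).sub hint) hlim
  rw [integral_sub (integrableOn_exp_neg_div hx) hint] at hftc
  linarith

lemma continuousOn_one_sub_exp_neg_mul_log {x : ℝ} :
    ContinuousOn (fun t => (1 - exp (-t)) * log t) (Icc 0 x) := by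
  intro t ht
  rcases ht.1.eq_or_lt with rfl | ht0
  -- `log 0 = 0` makes the value at `0` equal to the limit, as `(1 - e^{-t}) log t = O(t log t)`.
  · have hmul_log : Tendsto (fun t => t * log t) (𝓝[Icc 0 x] 0) (𝓝 0) := by
      simpa using (continuous_mul_log.continuousWithinAt (s := Icc 0 x) (x := 0)).tendsto
    suffices Tendsto (fun t => (1 - exp (-t)) * log t) (𝓝[Icc 0 x] 0) (𝓝 0) by
      simpa [ContinuousWithinAt] using this
    refine squeeze_zero_norm' ?_ (by simpa only [norm_zero] using hmul_log.norm)
    filter_upwards [self_mem_nhdsWithin] with t ht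
    rw [norm_mul, norm_mul, norm_of_nonneg (one_sub_exp_neg_nonneg ht.1), norm_of_nonneg ht.1]
    exact mul_le_mul_of_nonneg_right (one_sub_exp_neg_le t) (norm_nonneg _)
  · exact (ContinuousAt.continuousWithinAt (by fun_prop (disch := exact ht0.ne')))

lemma intervalIntegral_one_sub_exp_neg_div {x : ℝ} (hx : 0 ≤ x) :
    ∫ t in 0..x, (1 - exp (-t)) / t
      = (1 - exp (-x)) * log x - ∫ t in 0..x, exp (-t) * log t := by
  have hderiv : ∀ t ∈ Ioo 0 x, HasDerivAt (fun t => (1 - exp (-t)) * log t)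
      (exp (-t) * log t + (1 - exp (-t)) / t) t := by
    intro t ht
    exact (((hasDerivAt_neg t).exp.const_sub 1).mul (hasDerivAt_log ht.1.ne')).congr_deriv
      (by ring)
  have hftc := intervalIntegral.integral_eq_sub_of_hasDerivAt_of_le hx
    continuousOn_one_sub_exp_neg_mul_log hderiv
    ((intervalIntegrable_exp_neg_mul_log 0 x).add (intervalIntegrable_one_sub_exp_neg_div hx))
  rw [intervalIntegral.integral_add (intervalIntegrable_exp_neg_mul_log 0 x)
    (intervalIntegrable_one_sub_exp_neg_div hx)] at hftc
  simp only [neg_zero, exp_zero, sub_self, zero_mul, sub_zero] at hftc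
  linarith

theorem neg_Ei_neg_eq {x : ℝ} (hx : 0 < x) :
    -Ei (-x) = -eulerMascheroniConstant - log x + ∫ t in 0..x, (1 - exp (-t)) / t := by
  have hsplit := intervalIntegral.integral_interval_add_Ioi integrableOn_exp_neg_mul_log
    (integrableOn_exp_neg_mul_log.mono_set (Ioi_subset_Ioi hx.le))
  rw [integral_exp_neg_mul_log] at hsplit
  rw [Ei, neg_neg, neg_neg, integral_Ioi_exp_neg_div hx, intervalIntegral_one_sub_exp_neg_div hx.le]
  linear_combination hsplit

lemma intervalIntegral_one_sub_exp_neg_div_mem_Icc {x : ℝ} (hx : 0 ≤ x) :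
    ∫ t in 0..x, (1 - exp (-t)) / t ∈ Icc 0 x := by
  constructor
  · exact intervalIntegral.integral_nonneg hx fun t ht =>
      div_nonneg (one_sub_exp_neg_nonneg ht.1) ht.1
  · calc ∫ t in 0..x, (1 - exp (-t)) / t ≤ ∫ _ in 0..x, (1 : ℝ) :=
          intervalIntegral.integral_mono_on hx (intervalIntegrable_one_sub_exp_neg_div hx)
            intervalIntegrable_const fun t ht => div_le_one_of_le₀ (one_sub_exp_neg_le t) ht.1
      _ = x := by simp

theorem negEi_near_zero_general (x : ℝ) (hx0 : 0 < x) :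
    |(-Ei (-x)) - (-Real.eulerMascheroniConstant - Real.log x)| ≤ x := by
  obtain ⟨hnonneg, hle⟩ := intervalIntegral_one_sub_exp_neg_div_mem_Icc hx0.le
  rw [neg_Ei_neg_eq hx0, add_sub_cancel_left, abs_of_nonneg hnonneg]
  exact hle

/-- For `x ∈ (0, 1/2]`, `|(-Ei(-x)) - (-γ - log x)| ≤ x`, where `γ` is the
Euler–Mascheroni constant; i.e. `-Ei(-x) = -γ - log x + O(x)` as `x → 0⁺`. -/
theorem negEi_near_zero (x : ℝ) (hx0 : 0 < x) (hx : x ≤ 1 / 2) :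
    |(-Ei (-x)) - (-Real.eulerMascheroniConstant - Real.log x)| ≤ x :=
  negEi_near_zero_general x hx0
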